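/- Let A = (E, {M_k}_{k∈O}) be a quantum algorithm on a d-dimensional space and let 0 < η ≤ 1. Suppose there exists a subset S ⊆ O such that λ_min(M_S) = 0 and λ_max(M_S) > 0, where M_S = ∑_{k∈S} E†(M_k). Then for every ε ≥ 0, A is not ε-differentially private within η. -/

import Mathlib

open Matrix BigOperators
open scoped ComplexOrder

namespace QDP

variable {n : Type*} [Fintype n] [DecidableEq n]

/-- The square root of a positive semidefinite matrix, as `Matrix.PosSemidef.sqrt` was defined
in the older Mathlib (that definition has since been removed). -/
noncomputable def psdSqrt {A : Matrix n n ℂ} (hA : A.PosSemidef) : Matrix n n ℂ :=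
  hA.1.eigenvectorUnitary.1 * diagonal ((↑) ∘ (Real.sqrt ∘ hA.1.eigenvalues)) *
    (star hA.1.eigenvectorUnitary : Matrix n n ℂ)

/-- Trace distance `D(ρ,σ) = (1/2) tr |ρ - σ|`, where `|A| = sqrt (Aᴴ A)`. -/
noncomputable def traceDist (ρ σ : Matrix n n ℂ) : ℝ :=
  (1 / 2 : ℝ) * ((psdSqrt (Matrix.posSemidef_conjTranspose_mul_self (ρ - σ))).trace).re

/-- A density matrix: positive semidefinite with trace one. -/
def IsDensity (ρ : Matrix n n ℂ) : Prop := ρ.PosSemidef ∧ ρ.trace = 1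

/-- The largest eigenvalue of a (Hermitian) matrix. -/
noncomputable def lamMax (M : Matrix n n ℂ) : ℝ :=
  if h : M.IsHermitian then ⨆ i, h.eigenvalues i else 0

/-- The smallest eigenvalue of a (Hermitian) matrix. -/
noncomputable def lamMin (M : Matrix n n ℂ) : ℝ :=
  if h : M.IsHermitian then ⨅ i, h.eigenvalues i else 0

/-- Application of a quantum channel given by Kraus matrices. -/
noncomputable def applyChan {ι : Type*} [Fintype ι] (E : ι → Matrix n n ℂ)
    (ρ : Matrix n n ℂ) : Matrix n n ℂ := ∑ j, E j * ρ * (E j)ᴴ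

/-- The dual of a quantum channel given by Kraus matrices. -/
noncomputable def dualChan {ι : Type*} [Fintype ι] (E : ι → Matrix n n ℂ)
    (M : Matrix n n ℂ) : Matrix n n ℂ := ∑ j, (E j)ᴴ * M * E j

/-- `(ε,δ)`-differential privacy within `η` of the quantum algorithm `(E, M)`. -/
def IsDP {ι : Type*} [Fintype ι] {O : Type*} [Fintype O]
    (E : ι → Matrix n n ℂ) (M : O → Matrix n n ℂ) (ε δ η : ℝ) : Prop :=
  ∀ ρ σ : Matrix n n ℂ, IsDensity ρ → IsDensity σ → traceDist ρ σ ≤ η →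
    ∀ S : Finset O,
      (∑ k ∈ S, (M k * applyChan E ρ).trace).re ≤
        Real.exp ε * (∑ k ∈ S, (M k * applyChan E σ).trace).re + δ

/-- Rank-one projection `|ψ⟩⟨ψ|`. -/
noncomputable def proj (ψ : n → ℂ) : Matrix n n ℂ := vecMulVec ψ (star ψ)

end QDP

/-!
With `A = ∑_{k ∈ S} E†(M_k)`, the probability of the outcome set `S` on input `ρ` is `tr (A ρ)`.
Take orthonormal eigenvectors `u`, `v` of `A` for the eigenvalues `0` and `λ > 0`. The states
`ρ = (1 - η) |u⟩⟨u| + η |v⟩⟨v|` and `σ = |u⟩⟨u|` are at trace distance exactly `η`, but `S` has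
probability `η λ > 0` under `ρ` and `0` under `σ`, which no factor `e^ε` can bridge.
-/

lemma Matrix.IsHermitian.star_eigenvectorBasis_dotProduct {n : Type*} [Fintype n] [DecidableEq n]
    {A : Matrix n n ℂ} (hA : A.IsHermitian) (i j : n) :
    star ⇑(hA.eigenvectorBasis i) ⬝ᵥ ⇑(hA.eigenvectorBasis j) = if i = j then 1 else 0 := by
  rw [dotProduct_comm, ← EuclideanSpace.inner_eq_star_dotProduct,
    orthonormal_iff_ite.mp hA.eigenvectorBasis.orthonormal]

namespace QDP

variable {n : Type*} [Fintype n]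

lemma proj_posSemidef (ψ : n → ℂ) : (proj ψ).PosSemidef :=
  posSemidef_vecMulVec_self_star ψ

lemma conjTranspose_proj (ψ : n → ℂ) : (proj ψ)ᴴ = proj ψ :=
  (proj_posSemidef ψ).1

lemma trace_proj (ψ : n → ℂ) : (proj ψ).trace = star ψ ⬝ᵥ ψ := by
  rw [proj, trace_vecMulVec, dotProduct_comm]

lemma trace_mul_proj (A : Matrix n n ℂ) (ψ : n → ℂ) :
    (A * proj ψ).trace = star ψ ⬝ᵥ (A *ᵥ ψ) := by
  rw [proj, mul_vecMulVec, trace_vecMulVec, dotProduct_comm]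

lemma proj_mul_self {u : n → ℂ} (hu : star u ⬝ᵥ u = 1) : proj u * proj u = proj u := by
  rw [proj, vecMulVec_mul_vecMulVec, hu, one_smul]

lemma proj_mul_proj_eq_zero {u v : n → ℂ} (huv : star u ⬝ᵥ v = 0) : proj u * proj v = 0 := by
  rw [proj, proj, vecMulVec_mul_vecMulVec, huv, zero_smul]
  ext i j
  simp [vecMulVec_apply]

lemma isDensity_proj {ψ : n → ℂ} (hψ : star ψ ⬝ᵥ ψ = 1) : IsDensity (proj ψ) :=
  ⟨proj_posSemidef ψ, (trace_proj ψ).trans hψ⟩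

lemma IsDensity.convexComb {ρ σ : Matrix n n ℂ} (hρ : IsDensity ρ) (hσ : IsDensity σ) {t : ℝ}
    (ht₀ : 0 ≤ t) (ht₁ : t ≤ 1) : IsDensity ((1 - t) • ρ + t • σ) := by
  refine ⟨(hρ.1.smul (sub_nonneg.2 ht₁)).add (hσ.1.smul ht₀), ?_⟩
  rw [trace_add, trace_smul, trace_smul, hρ.2, hσ.2]
  simp

lemma trace_mul_applyChan {ι : Type*} [Fintype ι] (E : ι → Matrix n n ℂ) (M ρ : Matrix n n ℂ) :
    (M * applyChan E ρ).trace = (dualChan E M * ρ).trace := by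
  simp only [applyChan, dualChan, Matrix.mul_sum, Finset.sum_mul, trace_sum]
  refine Finset.sum_congr rfl fun j _ => ?_
  rw [← Matrix.mul_assoc, ← Matrix.mul_assoc, trace_mul_comm, ← Matrix.mul_assoc,
    ← Matrix.mul_assoc]

lemma sum_trace_mul_applyChan {ι O : Type*} [Fintype ι] (E : ι → Matrix n n ℂ)
    (M : O → Matrix n n ℂ) (S : Finset O) (ρ : Matrix n n ℂ) :
    ∑ k ∈ S, (M k * applyChan E ρ).trace = ((∑ k ∈ S, dualChan E (M k)) * ρ).trace := by
  simp only [trace_mul_applyChan, Finset.sum_mul, trace_sum]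

variable [DecidableEq n]

open scoped MatrixOrder in
lemma eq_psdSqrt_of_sq_eq {A C : Matrix n n ℂ} (hA : A.PosSemidef) (hC : C.PosSemidef)
    (h : C ^ 2 = A) : C = psdSqrt hA := by
  have psdSqrt_eq_sqrt : psdSqrt hA = CFC.sqrt A := by
    rw [CFC.sqrt_eq_cfc, cfc_nnreal_eq_real _ A (nonneg_iff_posSemidef.mpr hA), hA.1.cfc_eq]
    simp only [psdSqrt, IsHermitian.cfc, Unitary.conjStarAlgAut_apply]
    congr 3
    funext i
    simp [max_eq_left (hA.eigenvalues_nonneg i)]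
  rw [psdSqrt_eq_sqrt, ← h, CFC.sqrt_sq C (nonneg_iff_posSemidef.mpr hC)]

lemma traceDist_eq_of_sq_eq {ρ σ C : Matrix n n ℂ} (hC : C.PosSemidef)
    (h : C ^ 2 = (ρ - σ)ᴴ * (ρ - σ)) : traceDist ρ σ = C.trace.re / 2 := by
  rw [traceDist, ← eq_psdSqrt_of_sq_eq _ hC h]
  ring

lemma traceDist_convexComb_proj {u v : n → ℂ} (hu : star u ⬝ᵥ u = 1) (hv : star v ⬝ᵥ v = 1)
    (huv : star u ⬝ᵥ v = 0) {t : ℝ} (ht : 0 ≤ t) :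
    traceDist ((1 - t) • proj u + t • proj v) (proj u) = t := by
  have hvu : star v ⬝ᵥ u = 0 := by rw [star_dotProduct, huv, star_zero]
  have hC : (t • (proj u + proj v)).PosSemidef :=
    ((proj_posSemidef u).add (proj_posSemidef v)).smul ht
  rw [traceDist_eq_of_sq_eq hC, trace_smul, trace_add, trace_proj, trace_proj, hu, hv]
  · simp
  -- `|t (P_v - P_u)| = t (P_u + P_v)` for orthogonal rank-one projections `P_u`, `P_v`
  have hdiff : (1 - t) • proj u + t • proj v - proj u = t • (proj v - proj u) := by module
  rw [hdiff, conjTranspose_smul, conjTranspose_sub, conjTranspose_proj, conjTranspose_proj]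
  simp only [sq, smul_mul_smul_comm, add_mul, mul_add, sub_mul, mul_sub, proj_mul_self hu,
    proj_mul_self hv, proj_mul_proj_eq_zero huv, proj_mul_proj_eq_zero hvu, star_trivial]
  module

lemma isHermitian_of_lamMax_ne_zero {A : Matrix n n ℂ} (h : lamMax A ≠ 0) : A.IsHermitian := by
  by_contra hA
  exact h (dif_neg hA)

lemma nonempty_of_lamMax_ne_zero {A : Matrix n n ℂ} (h : lamMax A ≠ 0) : Nonempty n := by
  by_contra hn
  rw [not_nonempty_iff] at hn
  exact h (by unfold lamMax; split_ifs <;> simp)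

lemma exists_eigenvalues_eq_lamMin [Nonempty n] {A : Matrix n n ℂ} (hA : A.IsHermitian) :
    ∃ i, hA.eigenvalues i = lamMin A := by
  obtain ⟨i, hi⟩ := Finite.exists_min hA.eigenvalues
  refine ⟨i, ?_⟩
  rw [lamMin, dif_pos hA]
  exact le_antisymm (le_ciInf hi) (ciInf_le (Finite.bddBelow_range _) i)

lemma exists_eigenvalues_eq_lamMax [Nonempty n] {A : Matrix n n ℂ} (hA : A.IsHermitian) :
    ∃ i, hA.eigenvalues i = lamMax A := by
  obtain ⟨i, hi⟩ := Finite.exists_max hA.eigenvalues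
  refine ⟨i, ?_⟩
  rw [lamMax, dif_pos hA]
  exact le_antisymm (le_ciSup (Finite.bddAbove_range _) i) (ciSup_le hi)

theorem not_isDP_of_mulVec_eq {ι O : Type*} [Fintype ι] [Fintype O] (E : ι → Matrix n n ℂ)
    (M : O → Matrix n n ℂ) (S : Finset O) {u v : n → ℂ} {μ : ℝ} (hu : star u ⬝ᵥ u = 1)
    (hv : star v ⬝ᵥ v = 1) (huv : star u ⬝ᵥ v = 0)
    (hAu : (∑ k ∈ S, dualChan E (M k)) *ᵥ u = 0) (hAv : (∑ k ∈ S, dualChan E (M k)) *ᵥ v = μ • v)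
    {ε δ η : ℝ} (hη₀ : 0 ≤ η) (hη₁ : η ≤ 1) (hδ : δ < η * μ) : ¬ IsDP E M ε δ η := by
  intro hDP
  have hρ : (∑ k ∈ S, (M k * applyChan E ((1 - η) • proj u + η • proj v)).trace).re = η * μ := by
    rw [sum_trace_mul_applyChan, Matrix.mul_add, Matrix.mul_smul, Matrix.mul_smul, trace_add,
      trace_smul, trace_smul, trace_mul_proj, trace_mul_proj, hAu, hAv, dotProduct_smul, hv]
    simp
  have h := hDP _ _ ((isDensity_proj hu).convexComb (isDensity_proj hv) hη₀ hη₁) (isDensity_proj hu)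
    (traceDist_convexComb_proj hu hv huv hη₀).le S
  have hσ : (∑ k ∈ S, (M k * applyChan E (proj u)).trace).re = 0 := by
    rw [sum_trace_mul_applyChan, trace_mul_proj, hAu, dotProduct_zero, Complex.zero_re]
  rw [hρ, hσ, mul_zero, zero_add] at h
  linarith

end QDP

open QDP in
theorem not_epsDP_of_infinite_condition_number_general {d : ℕ}
    {ι O : Type} [Fintype ι] [Fintype O]
    (E : ι → Matrix (Fin d) (Fin d) ℂ)
    (M : O → Matrix (Fin d) (Fin d) ℂ)
    (η : ℝ) (hη0 : 0 < η) (hη1 : η ≤ 1)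
    (S : Finset O)
    (hmin : lamMin (∑ k ∈ S, dualChan E (M k)) = 0)
    (hmax : 0 < lamMax (∑ k ∈ S, dualChan E (M k))) :
    ∀ ε : ℝ, 0 ≤ ε → ¬ IsDP E M ε 0 η := by
  intro ε _
  have hA := isHermitian_of_lamMax_ne_zero hmax.ne'
  have := nonempty_of_lamMax_ne_zero hmax.ne'
  obtain ⟨i, hi⟩ := exists_eigenvalues_eq_lamMin hA
  obtain ⟨j, hj⟩ := exists_eigenvalues_eq_lamMax hA
  have hij : i ≠ j := by
    rintro rfl
    linarith
  have hbasis := hA.star_eigenvectorBasis_dotProduct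
  refine not_isDP_of_mulVec_eq E M S ((hbasis i i).trans (if_pos rfl))
    ((hbasis j j).trans (if_pos rfl)) ((hbasis i j).trans (if_neg hij)) ?_
    (hA.mulVec_eigenvectorBasis j) hη0.le hη1 (by rw [hj]; positivity)
  · rw [hA.mulVec_eigenvectorBasis, hi, hmin, zero_smul]

open QDP in
/-- If some `M_S` has minimum eigenvalue `0` and positive maximum eigenvalue (infinite
condition number), then the algorithm is not `ε`-differentially private for any `ε ≥ 0`. -/
theorem not_epsDP_of_infinite_condition_number {d : ℕ} (hd : 1 ≤ d)
    {ι O : Type} [Fintype ι] [Fintype O]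
    (E : ι → Matrix (Fin d) (Fin d) ℂ) (hE : ∑ j, (E j)ᴴ * E j = 1)
    (M : O → Matrix (Fin d) (Fin d) ℂ) (hMpos : ∀ k, (M k).PosSemidef)
    (hMsum : ∑ k, M k = 1)
    (η : ℝ) (hη0 : 0 < η) (hη1 : η ≤ 1)
    (S : Finset O)
    (hmin : lamMin (∑ k ∈ S, dualChan E (M k)) = 0)
    (hmax : 0 < lamMax (∑ k ∈ S, dualChan E (M k))) :
    ∀ ε : ℝ, 0 ≤ ε → ¬ IsDP E M ε 0 η :=
  not_epsDP_of_infinite_condition_number_general E M η hη0 hη1 S hmin hmax
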